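/- For all n ≥ 0 and a in a field with (q^k a; q)_{n+1} ≠ 0 for 0 ≤ k ≤ n, ∑_{k=0}^{n} (-1)^k q^{binom(k,2)} · qbinom(n,k) · (1 - q^{2k}a) / (q^k a; q)_{n+1} = [n = 0], where qbinom denotes the Gaussian binomial coefficient and (x;q)_m = ∏_{j=0}^{m-1}(1-q^j x). -/
import Mathlib


/-- The q-Pochhammer symbol `(x; q)_n = ∏_{j=0}^{n-1} (1 - q^j x)`. -/
def qPoch {F : Type*} [Field F] (q x : F) (n : ℕ) : F :=
  ∏ j ∈ Finset.range n, (1 - q ^ j * x)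

lemma qPoch_zero {F : Type*} [Field F] (q x : F) : qPoch q x 0 = 1 := by
  simp [qPoch]

lemma qPoch_succ {F : Type*} [Field F] (q x : F) (n : ℕ) :
    qPoch q x (n + 1) = qPoch q x n * (1 - q ^ n * x) := by
  simp [qPoch, Finset.prod_range_succ]

lemma qPoch_shift {F : Type*} [Field F] (q a : F) (k n : ℕ) :
    qPoch q (q ^ k * a) (n + 1) = (1 - q ^ k * a) * qPoch q (q ^ (k + 1) * a) n := by
  rw [qPoch, Finset.prod_range_succ', qPoch, pow_zero, one_mul, mul_comm]
  congr 1
  apply Finset.prod_congr rfl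
  intro j _
  ring

lemma qq_ne_zero {F : Type*} [Field F] {q : F} (hq : ∀ m : ℕ, 1 ≤ m → q ^ m ≠ 1) (m : ℕ) :
    qPoch q q m ≠ 0 := by
  rw [qPoch, Finset.prod_ne_zero_iff]
  intro j _
  rw [sub_ne_zero, ← pow_succ]
  exact fun h => hq (j + 1) (Nat.succ_le_succ (Nat.zero_le _)) h.symm

/-- Abstract fraction identity underlying the telescoping step. -/
lemma frac_helper {F : Type*} [Field F] (a e f s c A B C Q : F)
    (hB : B ≠ 0) (hC : C ≠ 0) (hQ : Q ≠ 0)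
    (he : 1 - e ≠ 0) (hf : 1 - f ≠ 0)
    (hea : 1 - e * a ≠ 0) (hg : 1 - e * f * (e * a) ≠ 0) :
    s * c * (A * (1 - e * f)) * (1 - e * e * a) /
        ((B * (1 - e) * (C * (1 - f))) * ((1 - e * a) * Q * (1 - e * f * (e * a))))
      - s * (e * c) * A / ((B * (1 - e) * C) * (Q * (1 - e * f * (e * a))))
    = s * c * A / ((B * (C * (1 - f))) * ((1 - e * a) * Q)) := by
  have hD1 : (B * (1 - e) * (C * (1 - f))) * ((1 - e * a) * Q * (1 - e * f * (e * a))) ≠ 0 :=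
    mul_ne_zero (mul_ne_zero (mul_ne_zero hB he) (mul_ne_zero hC hf))
      (mul_ne_zero (mul_ne_zero hea hQ) hg)
  have hD2 : (B * (1 - e) * C) * (Q * (1 - e * f * (e * a))) ≠ 0 :=
    mul_ne_zero (mul_ne_zero (mul_ne_zero hB he) hC) (mul_ne_zero hQ hg)
  have hD3 : (B * (C * (1 - f))) * ((1 - e * a) * Q) ≠ 0 :=
    mul_ne_zero (mul_ne_zero hB (mul_ne_zero hC hf)) (mul_ne_zero hea hQ)
  rw [div_sub_div _ _ hD1 hD2, div_eq_div_iff (mul_ne_zero hD1 hD2) hD3]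
  ring

/-- Goal-shaped version of `frac_helper`. -/
lemma frac_helper' {F : Type*} [Field F] (a e f s c A B C Q : F)
    (hB : B ≠ 0) (hC : C ≠ 0) (hQ : Q ≠ 0)
    (he : 1 - e ≠ 0) (hf : 1 - f ≠ 0)
    (hea : 1 - e * a ≠ 0) (hg : 1 - e * f * (e * a) ≠ 0) :
    s * c * (A * (1 - e * f) / (B * (1 - e) * (C * (1 - f)))) *
        ((1 - e * e * a) / ((1 - e * a) * Q * (1 - e * f * (e * a))))
    = s * c * (A / (B * (C * (1 - f)))) / ((1 - e * a) * Q)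
      - s * -1 * (e * c) * (A / (B * (1 - e) * C)) / (Q * (1 - e * f * (e * a))) := by
  rw [← mul_div_assoc, ← mul_div_assoc, div_mul_eq_mul_div, div_div, ← mul_div_assoc, div_div,
    ← mul_div_assoc, div_div]
  linear_combination frac_helper a e f s c A B C Q hB hC hQ he hf hea hg

/-- Abstract fraction identity for the last term. -/
lemma frac_helper2 {F : Type*} [Field F] (s c X Y P w : F)
    (hX : X ≠ 0) (hY : Y ≠ 0) (hP : P ≠ 0) (hw : 1 - w ≠ 0) :
    s * c * (X / (X * 1)) * ((1 - w) / (P * (1 - w))) = s * c * (Y / (Y * 1)) / P := by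
  rw [mul_one, mul_one, div_self hX, div_self hY]
  rw [mul_comm P (1 - w), div_mul_cancel_left₀ hw]
  ring

/-- Abstract fraction identity for the first term. -/
lemma frac_helper3 {F : Type*} [Field F] (a s X Y P : F)
    (hX : X ≠ 0) (hY : Y ≠ 0) (hP : P ≠ 0) (ha : 1 - a ≠ 0) :
    s * (X / (1 * X)) * ((1 - a) / ((1 - a) * P)) = s * (Y / (1 * Y)) / P := by
  rw [one_mul, one_mul, div_self hX, div_self hY]
  rw [div_mul_cancel_left₀ ha]
  ring

/-- The key telescoping step identity. Here `n = j+m+2`, `k = j+1`. -/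
lemma step_identity {F : Type*} [Field F] (q a : F) (j m : ℕ)
    (hq : ∀ m : ℕ, 1 ≤ m → q ^ m ≠ 1)
    (hP : qPoch q (q ^ (j + 1) * a) (j + m + 3) ≠ 0) :
    (-1 : F) ^ (j + 1) * q ^ ((j + 1).choose 2) *
      (qPoch q q (j + m + 2) / (qPoch q q (j + 1) * qPoch q q (m + 1))) *
      ((1 - q ^ (2 * (j + 1)) * a) / qPoch q (q ^ (j + 1) * a) (j + m + 3))
    = (-1 : F) ^ (j + 1) * q ^ ((j + 1).choose 2) *
        (qPoch q q (j + m + 1) / (qPoch q q j * qPoch q q (m + 1))) /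
          qPoch q (q ^ (j + 1) * a) (j + m + 2)
      - (-1 : F) ^ (j + 2) * q ^ ((j + 2).choose 2) *
        (qPoch q q (j + m + 1) / (qPoch q q (j + 1) * qPoch q q m)) /
          qPoch q (q ^ (j + 2) * a) (j + m + 2) := by
  have hqqA := qq_ne_zero hq (j + m + 1)
  have hqqB := qq_ne_zero hq j
  have hqqC := qq_ne_zero hq m
  have S1 : qPoch q (q ^ (j + 1) * a) (j + m + 3)
      = qPoch q (q ^ (j + 1) * a) (j + m + 2) * (1 - q ^ (j + m + 2) * (q ^ (j + 1) * a)) := by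
    rw [show j + m + 3 = (j + m + 2) + 1 by omega, qPoch_succ]
  have S2 : qPoch q (q ^ (j + 1) * a) (j + m + 2)
      = (1 - q ^ (j + 1) * a) * qPoch q (q ^ (j + 2) * a) (j + m + 1) := by
    rw [show j + m + 2 = (j + m + 1) + 1 by omega,
      qPoch_shift q a (j + 1) (j + m + 1), show j + 1 + 1 = j + 2 by omega]
  have S3 : qPoch q (q ^ (j + 2) * a) (j + m + 2)
      = qPoch q (q ^ (j + 2) * a) (j + m + 1) * (1 - q ^ (j + m + 2) * (q ^ (j + 1) * a)) := by
    rw [show j + m + 2 = (j + m + 1) + 1 by omega, qPoch_succ]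
    congr 1
    ring
  have S4 : qPoch q q (j + m + 2) = qPoch q q (j + m + 1) * (1 - q ^ (j + m + 2)) := by
    rw [show j + m + 2 = (j + m + 1) + 1 by omega, qPoch_succ, ← pow_succ]
  have S5 : qPoch q q (j + 1) = qPoch q q j * (1 - q ^ (j + 1)) := by
    rw [qPoch_succ, ← pow_succ]
  have S6 : qPoch q q (m + 1) = qPoch q q m * (1 - q ^ (m + 1)) := by
    rw [qPoch_succ, ← pow_succ]
  rw [S1, S2] at hP ⊢
  have h1 : (1 : F) - q ^ (j + 1) * a ≠ 0 := fun h => hP (by rw [h]; ring)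
  have hQ : qPoch q (q ^ (j + 2) * a) (j + m + 1) ≠ 0 := fun h => hP (by rw [h]; ring)
  have h2 : (1 : F) - q ^ (j + m + 2) * (q ^ (j + 1) * a) ≠ 0 := fun h => hP (by rw [h]; ring)
  have epow : q ^ (j + 1) * q ^ (m + 1) = q ^ (j + m + 2) := by
    rw [← pow_add]
    congr 1
    omega
  have hk : (1 : F) - q ^ (j + 1) ≠ 0 := by
    rw [sub_ne_zero]; exact fun h => hq (j + 1) (by omega) h.symm
  have hm : (1 : F) - q ^ (m + 1) ≠ 0 := by
    rw [sub_ne_zero]; exact fun h => hq (m + 1) (by omega) h.symm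
  have hg : (1 : F) - q ^ (j + 1) * q ^ (m + 1) * (q ^ (j + 1) * a) ≠ 0 := by
    rw [epow]; exact h2
  have hc : (j + 2).choose 2 = (j + 1) + (j + 1).choose 2 := by
    rw [show j + 2 = (j + 1) + 1 by omega, Nat.choose_succ_succ, Nat.choose_one_right]
  rw [S3, S4, S5, S6, hc]
  linear_combination
    frac_helper' a (q ^ (j + 1)) (q ^ (m + 1)) ((-1 : F) ^ (j + 1)) (q ^ ((j + 1).choose 2))
      (qPoch q q (j + m + 1)) (qPoch q q j) (qPoch q q m) (qPoch q (q ^ (j + 2) * a) (j + m + 1))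
      hqqB hqqC hQ hk hm h1 hg

theorem stmt_18 {F : Type*} [Field F] (q a : F) (n : ℕ)
    (hq : ∀ m : ℕ, 1 ≤ m → q ^ m ≠ 1)
    (ha : ∀ k : ℕ, k ≤ n → qPoch q (q ^ k * a) (n + 1) ≠ 0) :
    ∑ k ∈ Finset.range (n + 1),
        (-1 : F) ^ k * q ^ k.choose 2 *
          (qPoch q q n / (qPoch q q k * qPoch q q (n - k))) *
          ((1 - q ^ (2 * k) * a) / qPoch q (q ^ k * a) (n + 1))
      = if n = 0 then 1 else 0 := by
  have hqq := qq_ne_zero hq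
  obtain _ | m := n
  · -- n = 0
    have h0 := ha 0 (le_refl 0)
    have h1 : qPoch q (q ^ 0 * a) 1 = 1 - a := by simp [qPoch]
    rw [h1] at h0
    rw [Finset.sum_range_one]
    simp [qPoch, div_self h0]
  · -- n = m + 1
    set T : ℕ → F := fun k =>
      (-1 : F) ^ k * q ^ k.choose 2 *
        (qPoch q q (m + 1) / (qPoch q q k * qPoch q q (m + 1 - k))) *
        ((1 - q ^ (2 * k) * a) / qPoch q (q ^ k * a) (m + 1 + 1)) with hT
    set H : ℕ → F := fun k =>
      (-1 : F) ^ k * q ^ k.choose 2 *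
        (qPoch q q m / (qPoch q q (k - 1) * qPoch q q (m + 1 - k))) /
          qPoch q (q ^ k * a) (m + 1) with hH
    have key : ∀ k, 1 ≤ k → k ≤ m + 1 → ∑ j ∈ Finset.range k, T j = -H k := by
      intro k hk1
      induction k, hk1 using Nat.le_induction with
      | base =>
        intro _
        rw [Finset.sum_range_one]
        have h0 := ha 0 (by omega)
        rw [qPoch_shift q a 0 (m + 1)] at h0
        have h1 : (1 : F) - q ^ 0 * a ≠ 0 := fun h => h0 (by rw [h]; ring)
        have h2 : qPoch q (q ^ (0 + 1) * a) (m + 1) ≠ 0 := fun h => h0 (by rw [h]; ring)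
        simp only [hT, hH]
        rw [qPoch_shift q a 0 (m + 1),
          show (1 : ℕ) - 1 = 0 by omega, show m + 1 - 0 = m + 1 by omega,
          show m + 1 - 1 = m by omega, show Nat.choose 0 2 = 0 from rfl,
          show Nat.choose 1 2 = 0 from rfl, qPoch_zero]
        linear_combination
          frac_helper3 a ((-1 : F) ^ 0 * q ^ (0 : ℕ)) (qPoch q q (m + 1)) (qPoch q q m)
            (qPoch q (q ^ (0 + 1) * a) (m + 1)) (hqq (m + 1)) (hqq m) h2
            (by simpa using h1)
      | succ k hk1 ih =>
        intro hk2
        obtain ⟨j, rfl⟩ : ∃ j, k = j + 1 := ⟨k - 1, by omega⟩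
        obtain ⟨r, rfl⟩ : ∃ r, m = j + r + 1 := ⟨m - j - 1, by omega⟩
        rw [Finset.sum_range_succ, ih (by omega)]
        have hstep := step_identity q a j r hq (by
          have := ha (j + 1) (by omega)
          rwa [show j + r + 1 + 1 + 1 = j + r + 3 by omega] at this)
        simp only [hT, hH]
        rw [show j + 1 - 1 = j by omega, show j + r + 1 + 1 - (j + 1) = r + 1 by omega,
          show j + 1 + 1 - 1 = j + 1 by omega, show j + r + 1 + 1 - (j + 1 + 1) = r by omega,
          show j + r + 1 + 1 + 1 = j + r + 3 by omega, show j + r + 1 + 1 = j + r + 2 by omega,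
          show j + 1 + 1 = j + 2 by omega]
        linear_combination hstep
    rw [if_neg (by omega : ¬ m + 1 = 0)]
    show ∑ k ∈ Finset.range (m + 1 + 1), T k = 0
    rw [Finset.sum_range_succ, key (m + 1) (by omega) (le_refl _)]
    have hP := ha (m + 1) (le_refl _)
    rw [qPoch_succ q (q ^ (m + 1) * a) (m + 1)] at hP
    have h1 : qPoch q (q ^ (m + 1) * a) (m + 1) ≠ 0 := fun h => hP (by rw [h]; ring)
    have h2 : (1 : F) - q ^ (m + 1) * (q ^ (m + 1) * a) ≠ 0 := fun h => hP (by rw [h]; ring)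
    simp only [hT, hH]
    rw [show m + 1 - 1 = m by omega, show m + 1 - (m + 1) = 0 by omega,
      qPoch_succ q (q ^ (m + 1) * a) (m + 1), qPoch_zero]
    linear_combination
      frac_helper2 ((-1 : F) ^ (m + 1)) (q ^ ((m + 1).choose 2)) (qPoch q q (m + 1)) (qPoch q q m)
        (qPoch q (q ^ (m + 1) * a) (m + 1)) (q ^ (m + 1) * (q ^ (m + 1) * a))
        (hqq (m + 1)) (hqq m) h1 h2
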